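/- Let R = μ₀R⁰ + Σ_{i=1}^m μᵢR^{Jᵢ} be a quasi-Clifford algebraic curvature tensor on a scalar product space (V,g) with Hurwitz-like constants c₁,…,c_m. If X ∈ V is nonnull, λ ∈ ℝ with λ ≠ μ₀, and Y ∈ V satisfies 𝒥_X(Y) = ε_X·λ·Y, then 𝒥_Y(X) = ( μ₀·ε_Y + (μ₀²·g(X,Y)² − 9·Σ_{i=1}^m cᵢ·μᵢ²·g(Y,JᵢX)²) / (ε_X·(λ−μ₀)) )·X; in particular X is an eigenvector of 𝒥_Y. -/

import Mathlib

/-!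
Polarising the quasi-Clifford form gives `𝒥_X Y = μ₀ (ε_X Y - g(X,Y) X) + S X` and, dually,
`𝒥_Y X = μ₀ (ε_Y X - g(X,Y) Y) - S Y`, where `S = ∑ᵢ 3 μᵢ g(Jᵢ Y, X) Jᵢ`. The eigenvalue
equation reads `ε_X (λ - μ₀) Y = -μ₀ g(X,Y) X + S X`; substituting it into
`ε_X (λ - μ₀) 𝒥_Y X` leaves only `X` and `S² X`, and the Hurwitz relations make
`S² = (∑ᵢ cᵢ (3 μᵢ g(Jᵢ Y, X))²) · id`.
-/

open Module Finset

/-- The algebraic curvature tensor `R⁰` of constant sectional curvature one. -/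
def R0 {V : Type*} [AddCommGroup V] [Module ℝ V] (g : LinearMap.BilinForm ℝ V)
    (X Y Z W : V) : ℝ :=
  g Y Z * g X W - g X Z * g Y W

/-- The algebraic curvature tensor `R^J` generated by a `g`-skew-adjoint endomorphism `J`. -/
def RJ {V : Type*} [AddCommGroup V] [Module ℝ V] (g : LinearMap.BilinForm ℝ V)
    (J : V →ₗ[ℝ] V) (X Y Z W : V) : ℝ :=
  g (J X) Z * g (J Y) W - g (J Y) Z * g (J X) W + 2 * g (J X) Y * g (J Z) W

theorem mul_self_sum_smul_of_clifford {ι 𝕜 A : Type*} [Fintype ι] [DecidableEq ι] [Field 𝕜]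
    [NeZero (2 : 𝕜)] [Ring A] [Algebra 𝕜 A] (e : ι → A) (c : ι → 𝕜)
    (he : ∀ i j, e i * e j + e j * e i = (if i = j then 2 * c i else 0) • (1 : A))
    (a : ι → 𝕜) :
    (∑ i, a i • e i) * (∑ i, a i • e i) = (∑ i, c i * a i ^ 2) • (1 : A) := by
  have hprod : (∑ i, a i • e i) * (∑ i, a i • e i) = ∑ i, ∑ j, (a i * a j) • (e i * e j) := by
    simp only [Finset.sum_mul_sum, smul_mul_smul_comm]
  apply smul_right_injective A (two_ne_zero (α := 𝕜))
  calc (2 : 𝕜) • ((∑ i, a i • e i) * (∑ i, a i • e i))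
      = ∑ i, ∑ j, (a i * a j) • (e i * e j + e j * e i) := by
        rw [two_smul, hprod]
        nth_rewrite 2 [Finset.sum_comm]
        simp only [← Finset.sum_add_distrib, smul_add, mul_comm (a _) (a _)]
    _ = ∑ i, (2 * (c i * a i ^ 2)) • (1 : A) := by
        refine Finset.sum_congr rfl fun i _ => ?_
        simp only [he, ite_smul, zero_smul, smul_ite, smul_zero, Finset.sum_ite_eq,
          Finset.mem_univ, if_true, smul_smul]
        ring_nf
    _ = (2 : 𝕜) • ((∑ i, c i * a i ^ 2) • (1 : A)) := by
        rw [← Finset.sum_smul, ← Finset.mul_sum, smul_smul]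

section QuasiClifford

variable {V ι : Type*} [AddCommGroup V] [Module ℝ V]
  {g : LinearMap.BilinForm ℝ V} {J : ι → V →ₗ[ℝ] V}

theorem apply_self_eq_zero_of_skew (hsymm : ∀ x y, g x y = g y x) {T : V →ₗ[ℝ] V}
    (hskew : ∀ x y : V, g (T x) y = - g x (T y)) (x : V) : g (T x) x = 0 := by
  linarith [hskew x x, hsymm x (T x)]

theorem quasiClifford_jacobi_apply [Fintype ι] (hsymm : ∀ x y, g x y = g y x)
    (hskew : ∀ i, ∀ x y : V, g (J i x) y = - g x (J i y)) (μ₀ : ℝ) (μ : ι → ℝ) (X Y Z : V) :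
    μ₀ * R0 g Y X X Z + ∑ i, μ i * RJ g (J i) Y X X Z
      = g (μ₀ • (g X X • Y - g X Y • X) + ∑ i, (3 * μ i * g (J i Y) X) • J i X) Z := by
  simp only [R0, RJ, fun i => apply_self_eq_zero_of_skew hsymm (hskew i), map_add, map_sub,
    map_smul, map_sum, LinearMap.add_apply, LinearMap.sub_apply, LinearMap.smul_apply,
    LinearMap.sum_apply, smul_eq_mul, hsymm Y X]
  ring_nf

theorem quasiClifford_jacobi_eq [Fintype ι] (hsymm : ∀ x y, g x y = g y x)
    (hnd : g.SeparatingLeft)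
    (hskew : ∀ i, ∀ x y : V, g (J i x) y = - g x (J i y)) {μ₀ : ℝ} {μ : ι → ℝ}
    {R : V → V → V → V → ℝ}
    (hR : ∀ X Y Z W, R X Y Z W = μ₀ * R0 g X Y Z W + ∑ i, μ i * RJ g (J i) X Y Z W)
    {Jac : V → V →ₗ[ℝ] V} (hJac : ∀ X Y Z, g (Jac X Y) Z = R Y X X Z) (X Y : V) :
    Jac X Y = μ₀ • (g X X • Y - g X Y • X) + ∑ i, (3 * μ i * g (J i Y) X) • J i X :=
  LinearMap.ker_eq_bot.mp (LinearMap.separatingLeft_iff_ker_eq_bot.mp hnd) <|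
    LinearMap.ext fun Z => by
      rw [hJac, hR, quasiClifford_jacobi_apply hsymm hskew]

theorem quasiClifford_smul_jacobi_swap [Fintype ι] [DecidableEq ι]
    (hsymm : ∀ x y, g x y = g y x) (hnd : g.SeparatingLeft)
    (hskew : ∀ i, ∀ x y : V, g (J i x) y = - g x (J i y)) {c : ι → ℝ}
    (hhur : ∀ i j, J i ∘ₗ J j + J j ∘ₗ J i
      = ((if i = j then 2 * c i else 0 : ℝ) • LinearMap.id : V →ₗ[ℝ] V))
    {μ₀ : ℝ} {μ : ι → ℝ} {R : V → V → V → V → ℝ}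
    (hR : ∀ X Y Z W, R X Y Z W = μ₀ * R0 g X Y Z W + ∑ i, μ i * RJ g (J i) X Y Z W)
    {Jac : V → V →ₗ[ℝ] V} (hJac : ∀ X Y Z, g (Jac X Y) Z = R Y X X Z)
    {X Y : V} {lam : ℝ} (hY : Jac X Y = (g X X * lam) • Y) :
    (g X X * (lam - μ₀)) • Jac Y X = (g X X * (lam - μ₀) * μ₀ * g Y Y + μ₀ ^ 2 * g X Y ^ 2
      - 9 * ∑ i, c i * μ i ^ 2 * g Y (J i X) ^ 2) • X := by
  have hJ := quasiClifford_jacobi_eq hsymm hnd hskew hR hJac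
  set a : ι → ℝ := fun i => 3 * μ i * g (J i Y) X
  set S : Module.End ℝ V := ∑ i, a i • J i
  have hS : ∀ v, S v = ∑ i, a i • J i v := fun v => by simp [S]
  have hSS : S (S X) = (∑ i, c i * a i ^ 2) • X := by
    rw [← Module.End.mul_apply, mul_self_sum_smul_of_clifford J c (fun i j => by
      simpa [Module.End.mul_eq_comp, Module.End.one_eq_id] using hhur i j) a]
    simp
  have hKY : (g X X * (lam - μ₀)) • Y = -(μ₀ * g X Y) • X + S X := by
    rw [hS]
    linear_combination (norm := module) hY.symm.trans (hJ X Y)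
  have hJYX : Jac Y X = (μ₀ * g Y Y) • X - (μ₀ * g X Y) • Y - S Y := by
    have hterm : ∀ i, (3 * μ i * g (J i X) Y) • J i Y = -(a i • J i Y) := fun i => by
      rw [hskew, hsymm X, mul_neg, neg_smul]
    rw [hJ Y X, hS, Finset.sum_congr rfl fun i _ => hterm i, Finset.sum_neg_distrib, hsymm Y X]
    module
  have hcoef : ∑ i, c i * a i ^ 2 = 9 * ∑ i, c i * μ i ^ 2 * g Y (J i X) ^ 2 := by
    rw [Finset.mul_sum]
    exact Finset.sum_congr rfl fun i _ => by simp only [a, hskew]; ring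
  rw [hJYX, ← hcoef]
  have hSKY := congrArg S hKY
  simp only [map_add, map_smul, hSS] at hSKY
  linear_combination (norm := module) (-(μ₀ * g X Y)) • hKY - hSKY

end QuasiClifford

theorem quasiClifford_dual_formula_general
    {V : Type*} [AddCommGroup V] [Module ℝ V]
    (g : LinearMap.BilinForm ℝ V) (hsymm : ∀ x y, g x y = g y x) (hnd : g.Nondegenerate)
    {m : ℕ} (μ₀ : ℝ) (μ c : Fin m → ℝ) (J : Fin m → V →ₗ[ℝ] V)
    (hskew : ∀ i, ∀ x y : V, g (J i x) y = - g x (J i y))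
    (hhur : ∀ i j, J i ∘ₗ J j + J j ∘ₗ J i
      = ((if i = j then 2 * c i else 0 : ℝ) • LinearMap.id : V →ₗ[ℝ] V))
    (R : V → V → V → V → ℝ)
    (hR : ∀ X Y Z W, R X Y Z W = μ₀ * R0 g X Y Z W + ∑ i, μ i * RJ g (J i) X Y Z W)
    (Jac : V → V →ₗ[ℝ] V)
    (hJac : ∀ X Y Z, g (Jac X Y) Z = R Y X X Z)
    (X Y : V) (hX : g X X ≠ 0) (lam : ℝ) (hlam : lam ≠ μ₀)
    (hY : Jac X Y = (g X X * lam) • Y) :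
    Jac Y X = (μ₀ * g Y Y +
        (μ₀ ^ 2 * (g X Y) ^ 2 - 9 * ∑ i, c i * (μ i) ^ 2 * (g Y (J i X)) ^ 2) /
          (g X X * (lam - μ₀))) • X ∧
      ∃ lam' : ℝ, Module.End.HasEigenvector (Jac Y) lam' X := by
  have hK : g X X * (lam - μ₀) ≠ 0 := mul_ne_zero hX (sub_ne_zero.mpr hlam)
  have hvec : Jac Y X = (μ₀ * g Y Y +
      (μ₀ ^ 2 * (g X Y) ^ 2 - 9 * ∑ i, c i * (μ i) ^ 2 * (g Y (J i X)) ^ 2) /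
        (g X X * (lam - μ₀))) • X := by
    rw [← inv_smul_smul₀ hK (Jac Y X),
      quasiClifford_smul_jacobi_swap hsymm hnd.1 hskew hhur hR hJac hY, smul_smul]
    congr 1
    field_simp
    ring
  exact ⟨hvec, _, Module.End.mem_eigenspace_iff.mpr hvec, fun h => hX (by simp [h])⟩

/-- for a quasi-Clifford curvature tensor, a nonnull `X` and an eigenvector
`Y` of `𝒥_X` with `𝒥_X(Y) = ε_X λ Y`, `λ ≠ μ₀`, one has an explicit formula for
`𝒥_Y(X)`; in particular `X` is an eigenvector of `𝒥_Y`. -/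
theorem quasiClifford_dual_formula
    {V : Type*} [AddCommGroup V] [Module ℝ V] [FiniteDimensional ℝ V]
    (g : LinearMap.BilinForm ℝ V) (hsymm : ∀ x y, g x y = g y x) (hnd : g.Nondegenerate)
    {m : ℕ} (μ₀ : ℝ) (μ c : Fin m → ℝ) (J : Fin m → V →ₗ[ℝ] V)
    (hskew : ∀ i, ∀ x y : V, g (J i x) y = - g x (J i y))
    (hhur : ∀ i j, J i ∘ₗ J j + J j ∘ₗ J i
      = ((if i = j then 2 * c i else 0 : ℝ) • LinearMap.id : V →ₗ[ℝ] V))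
    (R : V → V → V → V → ℝ)
    (hR : ∀ X Y Z W, R X Y Z W = μ₀ * R0 g X Y Z W + ∑ i, μ i * RJ g (J i) X Y Z W)
    (Jac : V → V →ₗ[ℝ] V)
    (hJac : ∀ X Y Z, g (Jac X Y) Z = R Y X X Z)
    (X Y : V) (hX : g X X ≠ 0) (lam : ℝ) (hlam : lam ≠ μ₀)
    (hY : Jac X Y = (g X X * lam) • Y) :
    Jac Y X = (μ₀ * g Y Y +
        (μ₀ ^ 2 * (g X Y) ^ 2 - 9 * ∑ i, c i * (μ i) ^ 2 * (g Y (J i X)) ^ 2) /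
          (g X X * (lam - μ₀))) • X ∧
      ∃ lam' : ℝ, Module.End.HasEigenvector (Jac Y) lam' X :=
  quasiClifford_dual_formula_general g hsymm hnd μ₀ μ c J hskew hhur R hR Jac hJac X Y hX lam hlam
    hY
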